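/- (Inductive step for Theorem 1.) Fix an integer N ≥ 1 and real coefficients c_1, …, c_N. Suppose that for all real x and t with 1 - 2tx + t² > 0 and x ≠ t one has (2N-1)!! · F(t,x)^{2N+1} = Σ_{i=1}^{N} c_i · F^{(i)}(t,x)/(x-t)^{2N-i}. Then for all such x and t, (2N+1)!! · F(t,x)^{2N+3} = (2N-1)c_1 · F^{(1)}(t,x)/(x-t)^{2N+1} + Σ_{i=2}^{N} [(2N-i)c_i + c_{i-1}] · F^{(i)}(t,x)/(x-t)^{2N+2-i} + c_N · F^{(N+1)}(t,x)/(x-t)^{N+1}. -/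

import Mathlib

/-!
Differentiate the assumed identity in `t`; it holds on a neighbourhood of `t`, so the
derivatives of both sides agree. Since `F' = (x - t) F³`, the left side gives
`(2N+1)!! (x - t) F^(2N+3)`, while `d/dt (x - t)^(-k) = k (x - t)^(-k-1)` turns the `i`-th
term on the right into `c_i F⁽ⁱ⁺¹⁾/(x - t)^(2N-i) + (2N-i) c_i F⁽ⁱ⁾/(x - t)^(2N-i+1)`.
Dividing by `x - t` and collecting the terms by the order of the derivative gives the claim.
-/

open Filter Finset
open scoped ContDiff

theorem ContDiffAt.hasDerivAt_iteratedDeriv {𝕜 F : Type*} [NontriviallyNormedField 𝕜]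
    [NormedAddCommGroup F] [NormedSpace 𝕜 F] {f : 𝕜 → F} {x : 𝕜} {n : WithTop ℕ∞} {m : ℕ}
    (hf : ContDiffAt 𝕜 n f x) (hm : (m : WithTop ℕ∞) < n) :
    HasDerivAt (iteratedDeriv m f) (iteratedDeriv (m + 1) f x) x := by
  rw [iteratedDeriv_succ, iteratedDeriv_eq_equiv_comp]
  exact ((ContinuousMultilinearMap.piFieldEquiv 𝕜 (Fin m) F).symm.differentiableAt.comp x
    (hf.differentiableAt_iteratedFDeriv hm)).hasDerivAt

theorem HasDerivAt.div_const_sub_pow {𝕜 : Type*} [NontriviallyNormedField 𝕜] {g : 𝕜 → 𝕜}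
    {g' x t : 𝕜} (hg : HasDerivAt g g' t) (hxt : x ≠ t) (k : ℕ) :
    HasDerivAt (fun s => g s / (x - s) ^ k)
      (g' / (x - t) ^ k + k * g t / (x - t) ^ (k + 1)) t := by
  have hy : x - t ≠ 0 := sub_ne_zero.2 hxt
  have hpow : HasDerivAt (fun s => (x - s) ^ k) (k * (x - t) ^ (k - 1) * -1) t :=
    ((hasDerivAt_id t).const_sub x).pow k
  refine (hg.fun_div hpow (pow_ne_zero k hy)).congr_deriv ?_
  rcases k with _ | k
  · simp
  · rw [Nat.add_sub_cancel]
    field_simp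
    push_cast
    ring

/-- The paper's `F(t, x)`, arguments swapped so that `legendreGenFun x` is `t ↦ F(t, x)`. -/
noncomputable def legendreGenFun (x t : ℝ) : ℝ := (1 - 2 * t * x + t ^ 2) ^ (-(1 : ℝ) / 2)

theorem contDiffAt_legendreGenFun {x t : ℝ} {n : WithTop ℕ∞}
    (h : 0 < 1 - 2 * t * x + t ^ 2) :
    ContDiffAt ℝ n (legendreGenFun x) t :=
  ContDiffAt.rpow_const_of_ne (by fun_prop) h.ne'

theorem hasDerivAt_legendreGenFun {x t : ℝ} (h : 0 < 1 - 2 * t * x + t ^ 2) :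
    HasDerivAt (legendreGenFun x) ((x - t) * legendreGenFun x t ^ 3) t := by
  have hq : HasDerivAt (fun s => 1 - 2 * s * x + s ^ 2) (2 * t - 2 * x) t :=
    ((((hasDerivAt_id t).const_mul 2).mul_const x).const_sub 1).fun_add (hasDerivAt_pow 2 t)
      |>.congr_deriv (by simp; ring)
  refine (hq.rpow_const (p := -(1 : ℝ) / 2) (Or.inl h.ne')).congr_deriv ?_
  rw [legendreGenFun, ← Real.rpow_natCast _ 3, ← Real.rpow_mul h.le]
  norm_num
  ring

theorem Finset.sum_Icc_one_succ_add {M : Type*} [AddCommMonoid M] {N : ℕ} (hN : 1 ≤ N)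
    (a b : ℕ → M) :
    ∑ i ∈ Icc 1 N, (a (i + 1) + b i) = b 1 + ∑ i ∈ Icc 2 N, (a i + b i) + a (N + 1) := by
  have ha : ∑ i ∈ Icc 1 N, a (i + 1) = ∑ i ∈ Icc 2 N, a i + a (N + 1) := by
    rw [← sum_Icc_succ_top (by omega), show 2 = 1 + 1 from rfl, ← map_add_right_Icc, sum_map]
    rfl
  have hb : ∑ i ∈ Icc 1 N, b i = b 1 + ∑ i ∈ Icc 2 N, b i := by
    rw [← insert_Icc_add_one_left_eq_Icc hN, sum_insert (by simp)]
    rfl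
  rw [sum_add_distrib, sum_add_distrib, ha, hb]
  abel

theorem sum_div_pow_shift_regroup {K : Type*} [Field K] {N : ℕ} (hN : 1 ≤ N) (c g : ℕ → K)
    {y : K} (hy : y ≠ 0) :
    ∑ i ∈ Icc 1 N, (c i * g (i + 1) / y ^ (2 * N - i)
        + ((2 * N - i : ℕ) : K) * (c i * g i) / y ^ (2 * N - i + 1))
      = y * ((2 * N - 1 : K) * c 1 * g 1 / y ^ (2 * N + 1)
          + ∑ i ∈ Icc 2 N, ((2 * N - i : K) * c i + c (i - 1)) * g i / y ^ (2 * N + 2 - i)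
          + c N * g (N + 1) / y ^ (N + 1)) := by
  have hshift (a : K) (k : ℕ) : y * (a / y ^ (k + 1)) = a / y ^ k := by
    field_simp
    ring
  rw [mul_add, mul_add, mul_sum, hshift, hshift]
  convert sum_Icc_one_succ_add hN (fun j => c (j - 1) * g j / y ^ (2 * N + 1 - j))
    (fun i => (2 * N - i : K) * c i * g i / y ^ (2 * N + 1 - i)) using 1
  · refine sum_congr rfl fun i hi => ?_
    rw [mem_Icc] at hi
    rw [Nat.add_sub_cancel, show 2 * N + 1 - (i + 1) = 2 * N - i by omega,
      show 2 * N - i + 1 = 2 * N + 1 - i by omega, Nat.cast_sub (by omega)]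
    push_cast
    ring
  · congr 1
    · congr 1
      · rw [Nat.add_sub_cancel]
        ring
      · refine sum_congr rfl fun i hi => ?_
        rw [mem_Icc] at hi
        rw [show 2 * N + 2 - i = 2 * N + 1 - i + 1 by omega, hshift]
        ring
    · rw [show 2 * N + 1 - (N + 1) = N by omega, Nat.add_sub_cancel]

/-- Inductive step for Theorem 1: if for all real `x`, `t` with `1 - 2tx + t² > 0` and
`x ≠ t` one has `(2N-1)!! · F^(2N+1) = Σ_{i=1}^{N} c_i · F⁽ⁱ⁾/(x-t)^(2N-i)`, then
`(2N+1)!! · F^(2N+3) = (2N-1)c_1 · F⁽¹⁾/(x-t)^(2N+1)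
  + Σ_{i=2}^{N} [(2N-i)c_i + c_{i-1}] · F⁽ⁱ⁾/(x-t)^(2N+2-i) + c_N · F⁽ᴺ⁺¹⁾/(x-t)^(N+1)`. -/
theorem legendre_genFun_nonlinear_ODE_step (N : ℕ) (hN : 1 ≤ N) (c : ℕ → ℝ)
    (hyp : ∀ x t : ℝ, 1 - 2 * t * x + t ^ 2 > 0 → x ≠ t →
      (Nat.doubleFactorial (2 * N - 1) : ℝ)
          * ((1 - 2 * t * x + t ^ 2) ^ (-(1 : ℝ) / 2)) ^ (2 * N + 1)
        = ∑ i ∈ Finset.Icc 1 N, c i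
            * iteratedDeriv i (fun s : ℝ => (1 - 2 * s * x + s ^ 2) ^ (-(1 : ℝ) / 2)) t
            / (x - t) ^ (2 * N - i)) :
    ∀ x t : ℝ, 1 - 2 * t * x + t ^ 2 > 0 → x ≠ t →
      (Nat.doubleFactorial (2 * N + 1) : ℝ)
          * ((1 - 2 * t * x + t ^ 2) ^ (-(1 : ℝ) / 2)) ^ (2 * N + 3)
        = (2 * N - 1 : ℝ) * c 1
              * iteratedDeriv 1 (fun s : ℝ => (1 - 2 * s * x + s ^ 2) ^ (-(1 : ℝ) / 2)) t
              / (x - t) ^ (2 * N + 1)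
          + ∑ i ∈ Finset.Icc 2 N, ((2 * N - i : ℝ) * c i + c (i - 1))
              * iteratedDeriv i (fun s : ℝ => (1 - 2 * s * x + s ^ 2) ^ (-(1 : ℝ) / 2)) t
              / (x - t) ^ (2 * N + 2 - i)
          + c N * iteratedDeriv (N + 1) (fun s : ℝ => (1 - 2 * s * x + s ^ 2) ^ (-(1 : ℝ) / 2)) t
              / (x - t) ^ (N + 1) := by
  intro x t hpos hxt
  have hnear : (fun s => ((2 * N - 1).doubleFactorial : ℝ) * legendreGenFun x s ^ (2 * N + 1))
      =ᶠ[nhds t] fun s => ∑ i ∈ Icc 1 N,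
        c i * iteratedDeriv i (legendreGenFun x) s / (x - s) ^ (2 * N - i) := by
    filter_upwards [continuousAt_const.eventually_lt (g := fun s => 1 - 2 * s * x + s ^ 2)
      (by fun_prop) hpos, eventually_ne_nhds hxt.symm] with s hs hsx
    exact hyp x s hs hsx.symm
  have hL := ((hasDerivAt_legendreGenFun hpos).fun_pow (2 * N + 1)).const_mul
    ((2 * N - 1).doubleFactorial : ℝ)
  have hR := HasDerivAt.fun_sum (u := Icc 1 N) fun i _ =>
    (((contDiffAt_legendreGenFun (n := ∞) hpos).hasDerivAt_iteratedDeriv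
      (by exact_mod_cast ENat.natCast_lt_top i)).const_mul (c i)).div_const_sub_pow hxt
      (2 * N - i)
  have hderiv := hL.deriv.symm.trans <| hnear.deriv_eq.trans <| hR.deriv.trans <|
    sum_div_pow_shift_regroup hN c (iteratedDeriv · (legendreGenFun x) t) (sub_ne_zero.2 hxt)
  refine mul_left_cancel₀ (sub_ne_zero.2 hxt) (Eq.trans ?_ hderiv)
  rw [Nat.doubleFactorial_add_one, Nat.add_sub_cancel]
  unfold legendreGenFun
  push_cast
  ring
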